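/- Assume λ₂ = 0. Then the monic Freud polynomials P_n and the monic Sobolev orthogonal polynomials Q_n are related by xP_n(x) = Q_{n+1}(x) + a_n Q_{n-1}(x) for n ≥ 1, where a_n = k_n / k̂_{n-1}, k_n = ⟨P_n,P_n⟩_F and k̂_n = ⟨Q_n,Q_n⟩_S. -/

import Mathlib

open Polynomial MeasureTheory Filter Topology

/-- The Freud inner product `⟨f,g⟩_F = ∫_ℝ f(x) g(x) e^{-x⁴} dx`. -/
noncomputable def innerF (f g : Polynomial ℝ) : ℝ :=
  ∫ x : ℝ, f.eval x * g.eval x * Real.exp (-x ^ 4)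


/-- The Sobolev inner product
`⟨f,g⟩_S = ⟨f,g⟩_F + λ₁ f(0) g(0) + λ₂ f'(0) g'(0)`. -/
noncomputable def innerS (l1 l2 : ℝ) (f g : Polynomial ℝ) : ℝ :=
  innerF f g + l1 * f.eval 0 * g.eval 0
    + l2 * (Polynomial.derivative f).eval 0 * (Polynomial.derivative g).eval 0

/-!
Both inner products come from moment functionals invariant under `x ↦ -x`, so a monic
orthogonal polynomial has the parity of its degree. Since `xf` vanishes at `0`,
`⟨x f, g⟩_S = ⟨f, x g⟩_F`; hence `x P_n - a_n Q_{n-1}` is monic of degree `n + 1` and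
`S`-orthogonal to `x^j` for `j ≤ n`: for `j < n - 1` by orthogonality of `P_n` and `Q_{n-1}`,
for `j = n - 1` by the choice of `a_n`, and for `j = n` by parity. Monic orthogonal polynomials
being unique, it equals `Q_{n+1}`.
-/

theorem Polynomial.Monic.degree_sub_lt {R : Type*} [Ring R] [Nontrivial R] {p q : R[X]}
    (hp : p.Monic) (hq : q.Monic) (h : p.natDegree = q.natDegree) :
    (p - q).degree < p.natDegree := by
  rw [← degree_eq_natDegree hp.ne_zero]
  refine degree_sub_lt_left ?_ hp.ne_zero (by rw [hp.leadingCoeff, hq.leadingCoeff])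
  rw [degree_eq_natDegree hp.ne_zero, degree_eq_natDegree hq.ne_zero, h]

theorem Polynomial.X_pow_comp_neg_X {R : Type*} [CommRing R] (m : ℕ) :
    ((X : R[X]) ^ m).comp (-X) = (-1 : R) ^ m • X ^ m := by
  rw [X_pow_comp, neg_pow, smul_eq_C_mul, map_pow, map_neg, map_one]

namespace LinearMap.BilinForm

variable {K : Type*} [Field K] {B : LinearMap.BilinForm K K[X]} {n : ℕ} {p q : K[X]}

variable (B) in
structure IsMonicOrthogonal (n : ℕ) (p : K[X]) : Prop where
  monic : p.Monic
  natDegree_eq : p.natDegree = n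
  apply_X_pow : ∀ m < n, B p (X ^ m) = 0

variable (B) in
def IsCompNegXInvariant : Prop :=
  ∀ f g : K[X], B (f.comp (-X)) (g.comp (-X)) = B f g

theorem isCompNegXInvariant_mul_compr₂ {L : K[X] →ₗ[K] K}
    (hL : ∀ p, L (p.comp (-X)) = L p) :
    IsCompNegXInvariant ((LinearMap.mul K K[X]).compr₂ L) := fun f g => by
  simp only [LinearMap.compr₂_apply, LinearMap.mul_apply', ← mul_comp, hL]

namespace IsMonicOrthogonal

theorem apply_eq_zero_of_degree_lt (hp : B.IsMonicOrthogonal n p) (hq : q.degree < n) :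
    B p q = 0 := by
  rw [q.as_sum_support, map_sum]
  refine Finset.sum_eq_zero fun i hi => ?_
  have hin : i < n := by exact_mod_cast (le_degree_of_ne_zero (mem_support_iff.mp hi)).trans_lt hq
  rw [← C_mul_X_pow_eq_monomial, ← smul_eq_C_mul, map_smul, hp.apply_X_pow i hin, smul_zero]

theorem apply_self (hp : B.IsMonicOrthogonal n p) : B p p = B p (X ^ n) := by
  have h := hp.apply_eq_zero_of_degree_lt <| hp.natDegree_eq ▸
    hp.monic.degree_sub_lt (monic_X_pow n) (by rw [hp.natDegree_eq, natDegree_X_pow])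
  rwa [map_sub, sub_eq_zero] at h

theorem eq (hB : B.toQuadraticMap.Anisotropic) (hp : B.IsMonicOrthogonal n p)
    (hq : B.IsMonicOrthogonal n q) : p = q := by
  have hdeg : (p - q).degree < n := hp.natDegree_eq ▸
    hp.monic.degree_sub_lt hq.monic (hp.natDegree_eq.trans hq.natDegree_eq.symm)
  refine sub_eq_zero.mp (hB _ ?_)
  rw [BilinMap.toQuadraticMap_apply, LinearMap.map_sub₂, hp.apply_eq_zero_of_degree_lt hdeg,
    hq.apply_eq_zero_of_degree_lt hdeg, sub_zero]

theorem comp_neg_X (hB : B.toQuadraticMap.Anisotropic)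
    (hrefl : B.IsCompNegXInvariant) (hp : B.IsMonicOrthogonal n p) :
    p.comp (-X) = (-1 : K) ^ n • p := by
  have hq : B.IsMonicOrthogonal n ((-1 : K) ^ n • p.comp (-X)) := by
    refine ⟨?_, ?_, fun m hm => ?_⟩
    · simpa [smul_eq_C_mul, hp.natDegree_eq] using hp.monic.neg_one_pow_natDegree_mul_comp_neg_X
    · rw [natDegree_smul _ (pow_ne_zero n (neg_ne_zero.mpr one_ne_zero)), natDegree_comp,
        natDegree_neg, natDegree_X, mul_one, hp.natDegree_eq]
    · rw [map_smul, LinearMap.smul_apply, ← comp_neg_X_comp_neg_X (X ^ m), hrefl,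
        X_pow_comp_neg_X, map_smul, hp.apply_X_pow m hm, smul_zero, smul_zero]
  calc p.comp (-X) = (-1 : K) ^ n • ((-1 : K) ^ n • p.comp (-X)) := by
        rw [smul_smul, ← mul_pow, neg_one_mul, neg_neg, one_pow, one_smul]
    _ = (-1 : K) ^ n • p := by rw [hq.eq hB hp]

theorem apply_X_pow_eq_zero_of_odd [NeZero (2 : K)] (hB : B.toQuadraticMap.Anisotropic)
    (hrefl : B.IsCompNegXInvariant) (hp : B.IsMonicOrthogonal n p)
    {m : ℕ} (hodd : Odd (n + m)) : B p (X ^ m) = 0 := by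
  have h : B p (X ^ m) = -B p (X ^ m) :=
    calc B p (X ^ m) = B (p.comp (-X)) ((X ^ m).comp (-X)) := (hrefl _ _).symm
      _ = (-1 : K) ^ (n + m) • B p (X ^ m) := by
        rw [hp.comp_neg_X hB hrefl, X_pow_comp_neg_X, map_smul, map_smul, LinearMap.smul_apply,
          smul_smul, pow_add, mul_comm]
      _ = -B p (X ^ m) := by rw [hodd.neg_one_pow, neg_one_smul]
  have h2 : (2 : K) * B p (X ^ m) = 0 := by linear_combination h
  exact (mul_eq_zero.mp h2).resolve_left two_ne_zero

end IsMonicOrthogonal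

theorem X_mul_eq_add_of_isMonicOrthogonal [NeZero (2 : K)] {F S : LinearMap.BilinForm K K[X]}
    (hF : F.toQuadraticMap.Anisotropic) (hS : S.toQuadraticMap.Anisotropic)
    (hF_refl : F.IsCompNegXInvariant) (hS_refl : S.IsCompNegXInvariant)
    (hSF : ∀ f g, S (X * f) g = F f (X * g)) {m : ℕ} {P Q Q' : K[X]}
    (hP : F.IsMonicOrthogonal (m + 1) P) (hQ : S.IsMonicOrthogonal m Q)
    (hQ' : S.IsMonicOrthogonal (m + 2) Q') :
    X * P = Q' + C (F P P / S Q Q) * Q := by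
  set c := F P P / S Q Q
  have hSQ : S Q Q ≠ 0 := fun h => hQ.monic.ne_zero (hS Q h)
  have hXP : (X * P).natDegree = m + 2 := by
    rw [natDegree_X_mul hP.monic.ne_zero, hP.natDegree_eq]
  have hcQ : (c • Q).natDegree < (X * P).natDegree :=
    (natDegree_smul_le c Q).trans_lt (by rw [hQ.natDegree_eq, hXP]; omega)
  have hR : S.IsMonicOrthogonal (m + 2) (X * P - c • Q) := by
    refine ⟨(monic_X.mul hP.monic).sub_of_left (degree_lt_degree hcQ), ?_, fun j hj => ?_⟩
    · rw [natDegree_sub_eq_left_of_natDegree_lt hcQ, hXP]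
    rw [LinearMap.map_sub₂, LinearMap.map_smul₂, hSF, ← pow_succ']
    rcases (by omega : j < m ∨ j = m ∨ j = m + 1) with hj | rfl | rfl
    · rw [hP.apply_X_pow _ (by omega), hQ.apply_X_pow _ hj, smul_zero, sub_zero]
    · rw [← hP.apply_self, ← hQ.apply_self, smul_eq_mul, div_mul_cancel₀ _ hSQ, sub_self]
    · rw [hP.apply_X_pow_eq_zero_of_odd hF hF_refl ⟨m + 1, by ring⟩,
        hQ.apply_X_pow_eq_zero_of_odd hS hS_refl ⟨m, by ring⟩, smul_zero, sub_zero]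
  rw [← hR.eq hS hQ', smul_eq_C_mul, sub_add_cancel]

end LinearMap.BilinForm

theorem integrable_pow_mul_exp_neg_pow_four (i : ℕ) :
    Integrable fun x : ℝ => x ^ i * Real.exp (-x ^ 4) := by
  have hgauss : Integrable fun x : ℝ => x ^ i * Real.exp (-2 * x ^ 2) := by
    simpa [Real.rpow_natCast] using
      integrable_rpow_mul_exp_neg_mul_sq (s := i) two_pos (by linarith [i.cast_nonneg (α := ℝ)])
  refine (hgauss.const_mul (Real.exp 1)).mono (by fun_prop) (ae_of_all _ fun x => ?_)
  have hexp : Real.exp (-x ^ 4) ≤ Real.exp 1 * Real.exp (-2 * x ^ 2) := by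
    rw [← Real.exp_add, Real.exp_le_exp]
    nlinarith [sq_nonneg (x ^ 2 - 1)]
  simp only [norm_mul, Real.norm_eq_abs, abs_of_pos (Real.exp_pos _)]
  calc |x ^ i| * Real.exp (-x ^ 4) ≤ |x ^ i| * (Real.exp 1 * Real.exp (-2 * x ^ 2)) := by gcongr
    _ = Real.exp 1 * (|x ^ i| * Real.exp (-2 * x ^ 2)) := by ring

theorem integrable_eval_mul_exp_neg_pow_four (p : ℝ[X]) :
    Integrable fun x : ℝ => p.eval x * Real.exp (-x ^ 4) := by
  simp_rw [eval_eq_sum_range, Finset.sum_mul, mul_assoc]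
  exact integrable_finsetSum _ fun i _ => (integrable_pow_mul_exp_neg_pow_four i).const_mul _

noncomputable def freudFunctional : ℝ[X] →ₗ[ℝ] ℝ where
  toFun p := ∫ x, p.eval x * Real.exp (-x ^ 4)
  map_add' p q := by
    simp only [eval_add, add_mul]
    exact integral_add (integrable_eval_mul_exp_neg_pow_four p)
      (integrable_eval_mul_exp_neg_pow_four q)
  map_smul' c p := by
    simp only [eval_smul, smul_eq_mul, mul_assoc, RingHom.id_apply]
    exact integral_const_mul c _

theorem freudFunctional_apply (p : ℝ[X]) :
    freudFunctional p = ∫ x, p.eval x * Real.exp (-x ^ 4) := rfl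

theorem freudFunctional_comp_neg_X (p : ℝ[X]) :
    freudFunctional (p.comp (-X)) = freudFunctional p := by
  have h := integral_neg_eq_self (fun x : ℝ => p.eval x * Real.exp (-x ^ 4)) volume
  simp_rw [Even.neg_pow (by decide : Even 4)] at h
  simpa only [freudFunctional_apply, eval_comp, eval_neg, eval_X] using h

theorem freudFunctional_mul_self_pos {p : ℝ[X]} (hp : p ≠ 0) : 0 < freudFunctional (p * p) := by
  have hcont : Continuous fun x : ℝ => (p * p).eval x * Real.exp (-x ^ 4) := by fun_prop
  rw [freudFunctional_apply, integral_pos_iff_support_of_nonneg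
    (fun x => by simpa using mul_nonneg (mul_self_nonneg (p.eval x)) (Real.exp_pos _).le)
    (integrable_eval_mul_exp_neg_pow_four _)]
  obtain ⟨x, hx⟩ : ∃ x, p.eval x ≠ 0 := by
    by_contra! h
    exact hp (Polynomial.funext (by simpa using h))
  exact hcont.isOpen_support.measure_pos volume ⟨x, by simp [hx, Real.exp_ne_zero]⟩

noncomputable def freudForm : LinearMap.BilinForm ℝ ℝ[X] :=
  (LinearMap.mul ℝ ℝ[X]).compr₂ freudFunctional

noncomputable def sobolevForm (l1 : ℝ) : LinearMap.BilinForm ℝ ℝ[X] :=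
  (LinearMap.mul ℝ ℝ[X]).compr₂ (freudFunctional + l1 • leval 0)

theorem freudForm_apply (f g : ℝ[X]) : freudForm f g = innerF f g := by
  simp [freudForm, freudFunctional_apply, innerF]

theorem sobolevForm_apply (l1 : ℝ) (f g : ℝ[X]) : sobolevForm l1 f g = innerS l1 0 f g := by
  simp [sobolevForm, innerS, ← freudForm_apply, freudForm, mul_assoc]

theorem sobolevForm_X_mul (l1 : ℝ) (f g : ℝ[X]) :
    sobolevForm l1 (X * f) g = freudForm f (X * g) := by
  simp only [sobolevForm, freudForm, LinearMap.compr₂_apply, LinearMap.mul_apply',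
    LinearMap.add_apply, LinearMap.smul_apply, leval_apply, eval_mul, eval_X, zero_mul,
    smul_zero, add_zero, mul_left_comm f X g, mul_assoc]

theorem freudForm_posDef : freudForm.toQuadraticMap.PosDef := fun _ hp =>
  freudFunctional_mul_self_pos hp

theorem sobolevForm_posDef {l1 : ℝ} (hl1 : 0 ≤ l1) : (sobolevForm l1).toQuadraticMap.PosDef :=
  fun p hp => by
    have := freudFunctional_mul_self_pos hp
    simp only [LinearMap.BilinMap.toQuadraticMap_apply, sobolevForm, LinearMap.compr₂_apply,
      LinearMap.mul_apply', LinearMap.add_apply, LinearMap.smul_apply, leval_apply, eval_mul,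
      smul_eq_mul]
    nlinarith [mul_self_nonneg (p.eval 0)]

theorem freudForm_isCompNegXInvariant : freudForm.IsCompNegXInvariant :=
  LinearMap.BilinForm.isCompNegXInvariant_mul_compr₂ freudFunctional_comp_neg_X

theorem sobolevForm_isCompNegXInvariant (l1 : ℝ) : (sobolevForm l1).IsCompNegXInvariant :=
  LinearMap.BilinForm.isCompNegXInvariant_mul_compr₂ fun p => by
    simp [freudFunctional_comp_neg_X, eval_comp]

/-- Case `λ₂ = 0`: the monic Freud polynomials `P n` and the monic Sobolev orthogonal
polynomials `Q n` are related by `x P_n = Q_{n+1} + a_n Q_{n-1}` for `n ≥ 1`,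
where `a n = k n / k̂ (n-1)`. -/
theorem sobolev_freud_connection_xP
    (l1 : ℝ) (hl1 : 0 ≤ l1)
    (P Q : ℕ → Polynomial ℝ) (k khat : ℕ → ℝ)
    (hPmonic : ∀ n, (P n).Monic) (hPdeg : ∀ n, (P n).natDegree = n)
    (hPorth : ∀ n m : ℕ, m < n → innerF (P n) (X ^ m) = 0)
    (hQmonic : ∀ n, (Q n).Monic) (hQdeg : ∀ n, (Q n).natDegree = n)
    (hQorth : ∀ n m : ℕ, m < n → innerS l1 0 (Q n) (X ^ m) = 0)
    (hk : ∀ n, k n = innerF (P n) (P n))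
    (hkhat : ∀ n, khat n = innerS l1 0 (Q n) (Q n))
    (a : ℕ → ℝ) (ha : ∀ n, a n = k n / khat (n - 1)) :
    ∀ n, 1 ≤ n → X * P n = Q (n + 1) + C (a n) * Q (n - 1) := by
  intro n hn
  obtain ⟨m, rfl⟩ := Nat.exists_eq_add_of_le' hn
  have hP : freudForm.IsMonicOrthogonal (m + 1) (P (m + 1)) :=
    ⟨hPmonic _, hPdeg _, fun j hj => (freudForm_apply _ _).trans (hPorth _ j hj)⟩
  have hQ (n : ℕ) : (sobolevForm l1).IsMonicOrthogonal n (Q n) :=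
    ⟨hQmonic n, hQdeg n, fun j hj => (sobolevForm_apply l1 _ _).trans (hQorth n j hj)⟩
  rw [ha, hk, hkhat, Nat.add_sub_cancel, ← freudForm_apply, ← sobolevForm_apply]
  exact LinearMap.BilinForm.X_mul_eq_add_of_isMonicOrthogonal freudForm_posDef.anisotropic
    (sobolevForm_posDef hl1).anisotropic freudForm_isCompNegXInvariant
    (sobolevForm_isCompNegXInvariant l1) (sobolevForm_X_mul l1) hP (hQ m) (hQ (m + 2))
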